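/- arXiv:2207.04486 — 2 statements merged into one kernel-verified Lean document; each statement's English description precedes it below -/
import Mathlib

section
/- For every bounded continuous section f of π, every y ∈ Y and all 0 < t < s, one has iD⁺f(y, t) ≤ iD⁻f(y, s). -/
open Metric Set Filter Topology MeasureTheory

/-- `F(t,y,z) = max_j f_j(z) + d(f(z), π⁻¹(y))² / (2t)`. -/
noncomputable def hlF {κ : ℕ} (Y : Set (EuclideanSpace ℝ (Fin κ)))
    (π : EuclideanSpace ℝ (Fin κ) → Y) (f : Y → EuclideanSpace ℝ (Fin κ))
    (t : ℝ) (y z : Y) : ℝ :=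
  (⨆ j, f z j) + (Metric.infDist (f z) (π ⁻¹' {y}))^2 / (2*t)

/-- The intrinsic Hopf–Lax semigroup `iQ_t f(y) = inf_{z ∈ Y} F(t,y,z)`. -/
noncomputable def iQ {κ : ℕ} (Y : Set (EuclideanSpace ℝ (Fin κ)))
    (π : EuclideanSpace ℝ (Fin κ) → Y) (f : Y → EuclideanSpace ℝ (Fin κ))
    (t : ℝ) (y : Y) : ℝ :=
  ⨅ z : Y, hlF Y π f t y z

/-- A minimizing sequence for `iQ_t f(y)`. -/
def IsMinSeq {κ : ℕ} (Y : Set (EuclideanSpace ℝ (Fin κ)))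
    (π : EuclideanSpace ℝ (Fin κ) → Y) (f : Y → EuclideanSpace ℝ (Fin κ))
    (t : ℝ) (y : Y) (u : ℕ → Y) : Prop :=
  Filter.Tendsto (fun n => hlF Y π f t y (u n)) Filter.atTop (nhds (iQ Y π f t y))

/-- `iD⁺f(y,t)`. -/
noncomputable def iDp {κ : ℕ} (Y : Set (EuclideanSpace ℝ (Fin κ)))
    (π : EuclideanSpace ℝ (Fin κ) → Y) (f : Y → EuclideanSpace ℝ (Fin κ))
    (y : Y) (t : ℝ) : ℝ :=
  sSup { a : ℝ | ∃ u : ℕ → Y, IsMinSeq Y π f t y u ∧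
    a = Filter.limsup (fun n => Metric.infDist (f (u n)) (π ⁻¹' {y})) Filter.atTop }

/-- `iD⁻f(y,t)`. -/
noncomputable def iDm {κ : ℕ} (Y : Set (EuclideanSpace ℝ (Fin κ)))
    (π : EuclideanSpace ℝ (Fin κ) → Y) (f : Y → EuclideanSpace ℝ (Fin κ))
    (y : Y) (t : ℝ) : ℝ :=
  sInf { a : ℝ | ∃ u : ℕ → Y, IsMinSeq Y π f t y u ∧
    a = Filter.liminf (fun n => Metric.infDist (f (u n)) (π ⁻¹' {y})) Filter.atTop }

/-!
Let `a` almost minimize `F(t, y, ·)` and `b` almost minimize `F(s, y, ·)`, up to `ε`. Adding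
`F(t, y, a) ≤ F(t, y, b) + ε` and `F(s, y, b) ≤ F(s, y, a) + ε`, the terms `max_j f_j` cancel and
what is left is `(1/(2t) - 1/(2s)) (d(a)² - d(b)²) ≤ 2ε`, where `d(z) = d(f(z), π⁻¹(y))`. Since
`t < s` the coefficient is positive, so along minimizing sequences the distances for `t` are
eventually at most those for `s` plus any `δ > 0`. Boundedness of `f` makes `max_j f_j` bounded
below; this keeps `iQ` finite and the distances along minimizing sequences bounded, so that the
`limsup` and `liminf` are not junk values.
-/

lemma neg_norm_le_iSup_apply {ι : Type*} [Fintype ι] {p : ENNReal} [Fact (1 ≤ p)]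
    (x : PiLp p fun _ : ι => ℝ) : -‖x‖ ≤ ⨆ j, x j := by
  rcases isEmpty_or_nonempty ι with _ | ⟨⟨j⟩⟩
  · simp [Real.iSup_of_isEmpty]
  · calc -‖x‖ ≤ x j :=
          neg_le_of_abs_le ((Real.norm_eq_abs _).symm.trans_le (PiLp.norm_apply_le x j))
      _ ≤ ⨆ j, x j := le_ciSup (Finite.bddAbove_range _) j

lemma bddBelow_range_iSup_apply {ι Z : Type*} [Fintype ι] {p : ENNReal} [Fact (1 ≤ p)]
    {f : Z → PiLp p fun _ : ι => ℝ} (hf : Bornology.IsBounded (range f)) :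
    BddBelow (range fun z => ⨆ j, f z j) := by
  obtain ⟨C, hC⟩ := isBounded_iff_forall_norm_le.1 hf
  exact ⟨-C, forall_mem_range.2 fun z =>
    (neg_le_neg (hC _ (mem_range_self z))).trans (neg_norm_le_iSup_apply _)⟩

lemma exists_seq_tendsto_ciInf {Z : Type*} [Nonempty Z] {F : Z → ℝ} (hF : BddBelow (range F)) :
    ∃ u : ℕ → Z, Tendsto (F ∘ u) atTop (𝓝 (⨅ z, F z)) := by
  obtain ⟨x, -, hx, hxF⟩ := exists_seq_tendsto_sInf (range_nonempty F) hF
  choose u hu using hxF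
  refine ⟨u, ?_⟩
  simp only [Function.comp_def, hu]
  exact hx

lemma limsup_le_liminf_of_forall_pos {α β : Type*} {l : Filter α} {l' : Filter β}
    {a : α → ℝ} {b : β → ℝ} (ha : IsCoboundedUnder (· ≤ ·) l a)
    (hb : IsCoboundedUnder (· ≥ ·) l' b) (h : ∀ δ > 0, ∀ᶠ m in l', ∀ᶠ n in l, a n ≤ b m + δ) :
    limsup a l ≤ liminf b l' := by
  refine le_of_forall_pos_le_add fun δ hδ => ?_
  have hle : ∀ᶠ m in l', limsup a l - δ ≤ b m :=
    (h δ hδ).mono fun m hm => sub_le_iff_le_add.2 (limsup_le_of_le ha hm)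
  linarith [le_liminf_of_le hb hle]

/-- `hlF Y π f r y` is `hopfLax (fun z => ⨆ j, f z j) (fun z => infDist (f z) (π ⁻¹' {y})) r`. -/
noncomputable def hopfLax {Z : Type*} (g D : Z → ℝ) (r : ℝ) (z : Z) : ℝ :=
  g z + D z ^ 2 / (2 * r)

section HopfLax

variable {Z : Type*} {g D : Z → ℝ}

lemma bddBelow_range_hopfLax (hg : BddBelow (range g)) {r : ℝ} (hr : 0 ≤ r) :
    BddBelow (range (hopfLax g D r)) := by
  obtain ⟨m, hm⟩ := hg
  exact ⟨m, forall_mem_range.2 fun z =>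
    (hm (mem_range_self z)).trans (le_add_of_nonneg_right (by positivity))⟩

lemma mul_sq_sub_sq_le_hopfLax_sub_iInf {t s : ℝ} (ht : BddBelow (range (hopfLax g D t)))
    (hs : BddBelow (range (hopfLax g D s))) (a b : Z) :
    (1 / (2 * t) - 1 / (2 * s)) * (D a ^ 2 - D b ^ 2) ≤
      (hopfLax g D t a - ⨅ z, hopfLax g D t z) + (hopfLax g D s b - ⨅ z, hopfLax g D s z) := by
  have hb : ⨅ z, hopfLax g D t z ≤ hopfLax g D t b := ciInf_le ht b
  have ha : ⨅ z, hopfLax g D s z ≤ hopfLax g D s a := ciInf_le hs a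
  have hcancel : (1 / (2 * t) - 1 / (2 * s)) * (D a ^ 2 - D b ^ 2) =
      (hopfLax g D t a - hopfLax g D t b) + (hopfLax g D s b - hopfLax g D s a) := by
    simp only [hopfLax]
    ring
  linarith

lemma isBoundedUnder_le_of_tendsto_hopfLax {α : Type*} {l : Filter α} (hg : BddBelow (range g))
    {s Q : ℝ} (hs : 0 < s) {v : α → Z} (hv : Tendsto (fun n => hopfLax g D s (v n)) l (𝓝 Q)) :
    IsBoundedUnder (· ≤ ·) l fun n => D (v n) := by
  obtain ⟨m, hm⟩ := hg
  refine isBoundedUnder_of_eventually_le (a := 1 + 2 * s * (Q + 1 - m)) ?_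
  filter_upwards [hv.eventually (gt_mem_nhds (lt_add_one Q))] with n hn
  have hgm : m ≤ g (v n) := hm (mem_range_self _)
  have hsq : D (v n) ^ 2 / (2 * s) < Q + 1 - m := by
    simp only [hopfLax] at hn
    linarith
  rw [div_lt_iff₀ (by positivity)] at hsq
  nlinarith [sq_nonneg (D (v n) - 1)]

theorem limsup_le_liminf_of_tendsto_hopfLax {α β : Type*} {l : Filter α} {l' : Filter β}
    [NeBot l] [NeBot l'] (hg : BddBelow (range g)) (hD : ∀ z, 0 ≤ D z) {t s : ℝ} (ht : 0 < t)
    (hts : t < s) {u : α → Z} {v : β → Z}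
    (hu : Tendsto (fun n => hopfLax g D t (u n)) l (𝓝 (⨅ z, hopfLax g D t z)))
    (hv : Tendsto (fun m => hopfLax g D s (v m)) l' (𝓝 (⨅ z, hopfLax g D s z))) :
    limsup (fun n => D (u n)) l ≤ liminf (fun m => D (v m)) l' := by
  have hs : 0 < s := ht.trans hts
  have hc : 0 < 1 / (2 * t) - 1 / (2 * s) :=
    sub_pos.2 (one_div_lt_one_div_of_lt (by positivity) (by linarith))
  refine limsup_le_liminf_of_forall_pos (isCoboundedUnder_le_of_le l fun n => hD (u n))
    (isBoundedUnder_le_of_tendsto_hopfLax hg hs hv).isCoboundedUnder_ge fun δ hδ => ?_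
  have hε : 0 < (1 / (2 * t) - 1 / (2 * s)) * δ ^ 2 / 2 := by positivity
  filter_upwards [hv.eventually (gt_mem_nhds (lt_add_of_pos_right _ hε))] with m hm
  filter_upwards [hu.eventually (gt_mem_nhds (lt_add_of_pos_right _ hε))] with n hn
  have hexcess := mul_sq_sub_sq_le_hopfLax_sub_iInf (bddBelow_range_hopfLax (D := D) hg ht.le)
    (bddBelow_range_hopfLax (D := D) hg hs.le) (u n) (v m)
  have hsq : D (u n) ^ 2 - D (v m) ^ 2 < δ ^ 2 :=
    lt_of_mul_lt_mul_left (by linarith) hc.le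
  nlinarith [hD (u n), hD (v m)]

end HopfLax

theorem stmt_3_general (κ : ℕ)
    (Y : Set (EuclideanSpace ℝ (Fin κ)))
    (π : EuclideanSpace ℝ (Fin κ) → Y)
    (f : Y → EuclideanSpace ℝ (Fin κ))
    (hfb : Bornology.IsBounded (Set.range f))

    (y : Y) (t s : ℝ) (ht : 0 < t) (hts : t < s) :
    iDp Y π f y t ≤ iDm Y π f y s := by
  have : Nonempty Y := ⟨y⟩
  have hg := bddBelow_range_iSup_apply hfb
  set D : Y → ℝ := fun z => infDist (f z) (π ⁻¹' {y})
  obtain ⟨u₀, hu₀⟩ := exists_seq_tendsto_ciInf (bddBelow_range_hopfLax (D := D) hg ht.le)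
  obtain ⟨v₀, hv₀⟩ :=
    exists_seq_tendsto_ciInf (bddBelow_range_hopfLax (D := D) hg (ht.trans hts).le)
  refine csSup_le ⟨_, u₀, hu₀, rfl⟩ ?_
  rintro _ ⟨u, hu, rfl⟩
  refine le_csInf ⟨_, v₀, hv₀, rfl⟩ ?_
  rintro _ ⟨v, hv, rfl⟩
  exact limsup_le_liminf_of_tendsto_hopfLax hg (fun _ => infDist_nonneg) ht hts hu hv

theorem stmt_3 (κ : ℕ) (hκ : 1 ≤ κ)
    (Y : Set (EuclideanSpace ℝ (Fin κ))) (hY : Y.Nonempty) (hYb : Bornology.IsBounded Y)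
    (π : EuclideanSpace ℝ (Fin κ) → Y) (hπc : Continuous π) (hπo : IsOpenMap π)
    (hπs : Function.Surjective π)
    (f : Y → EuclideanSpace ℝ (Fin κ)) (hfc : Continuous f)
    (hfb : Bornology.IsBounded (Set.range f)) (hsec : ∀ y : Y, π (f y) = y)

    (y : Y) (t s : ℝ) (ht : 0 < t) (hts : t < s) :
    iDp Y π f y t ≤ iDm Y π f y s :=
  stmt_3_general κ Y π f hfb y t s ht hts
end

section
/- For every bounded continuous section f of π and every y ∈ Y, the map t ↦ iQ_t f(y) is differentiable at Lebesgue-almost every t ∈ (0, ∞). -/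
open Metric Set Filter Topology MeasureTheory

lemma coord_abs_le_norm {κ : ℕ} (x : EuclideanSpace ℝ (Fin κ)) (j : Fin κ) : |x j| ≤ ‖x‖ := by
  rw [EuclideanSpace.norm_eq]
  rw [show |x j| = Real.sqrt (|x j|^2) by rw [Real.sqrt_sq_eq_abs, abs_abs]]
  apply Real.sqrt_le_sqrt
  exact Finset.single_le_sum (f := fun i => |x i|^2) (fun i _ => sq_nonneg _) (Finset.mem_univ j)

theorem stmt_8 (κ : ℕ) (hκ : 1 ≤ κ)
    (Y : Set (EuclideanSpace ℝ (Fin κ))) (hY : Y.Nonempty) (hYb : Bornology.IsBounded Y)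
    (π : EuclideanSpace ℝ (Fin κ) → Y) (hπc : Continuous π) (hπo : IsOpenMap π)
    (hπs : Function.Surjective π)
    (f : Y → EuclideanSpace ℝ (Fin κ)) (hfc : Continuous f)
    (hfb : Bornology.IsBounded (Set.range f)) (hsec : ∀ y : Y, π (f y) = y)

    (y : Y) :
    ∀ᵐ t ∂(MeasureTheory.volume.restrict (Set.Ioi (0:ℝ))),
      DifferentiableAt ℝ (fun s => iQ Y π f s y) t := by

  have hYne : Nonempty Y := hY.to_subtype
  have hj : Nonempty (Fin κ) := ⟨⟨0, hκ⟩⟩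
  obtain ⟨M, hM⟩ := hfb.exists_norm_le
  have hlb : ∀ t > (0:ℝ), ∀ z : Y, -M ≤ hlF Y π f t y z := by
    intro t ht z
    have h1 : -M ≤ ⨆ j, f z j := by
      have hn : ‖f z‖ ≤ M := hM _ (mem_range_self z)
      have : -M ≤ f z ⟨0, hκ⟩ := by
        have := neg_abs_le (f z ⟨0, hκ⟩)
        nlinarith [coord_abs_le_norm (f z) ⟨0, hκ⟩]
      exact this.trans (le_ciSup (f := fun j => f z j) (Finite.bddAbove_range _) (⟨0, hκ⟩ : Fin κ))
    have h2 : 0 ≤ (Metric.infDist (f z) (π ⁻¹' {y}))^2 / (2*t) :=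
      div_nonneg (sq_nonneg _) (by linarith)
    unfold hlF; linarith
  have hbdd : ∀ t > (0:ℝ), BddBelow (Set.range (fun z : Y => hlF Y π f t y z)) := by
    intro t ht
    exact ⟨-M, by rintro _ ⟨z, rfl⟩; exact hlb t ht z⟩
  have hval : ∀ t : ℝ, hlF Y π f t y y = ⨆ j, f y j := by
    intro t
    have hmem : f y ∈ π ⁻¹' {y} := by simp [hsec y]
    have : Metric.infDist (f y) (π ⁻¹' {y}) = 0 := Metric.infDist_zero_of_mem hmem
    simp [hlF, this]
  set C := ⨆ j, f y j with hC
  set g : ℝ → ℝ := fun t => if t ≤ 0 then C else iQ Y π f t y with hg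
  have hIQle : ∀ t > (0:ℝ), iQ Y π f t y ≤ C := by
    intro t ht
    have := ciInf_le (hbdd t ht) y
    rwa [hval t] at this
  have hanti : Antitone g := by
    intro s t hst
    by_cases ht : t ≤ 0
    · have hs : s ≤ 0 := hst.trans ht
      simp [hg, hs, ht]
    · push_neg at ht
      by_cases hs : s ≤ 0
      · simp only [hg, hs, if_pos, if_neg (not_le.mpr ht)]
        exact hIQle t ht
      · push_neg at hs
        simp only [hg, if_neg (not_le.mpr hs), if_neg (not_le.mpr ht)]
        apply ciInf_mono (hbdd t ht)
        intro z
        unfold hlF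
        have : (Metric.infDist (f z) (π ⁻¹' {y}))^2 / (2*t)
            ≤ (Metric.infDist (f z) (π ⁻¹' {y}))^2 / (2*s) := by
          apply div_le_div_of_nonneg_left (sq_nonneg _) (by linarith) (by linarith)
        linarith
  have hmono : Monotone (fun t => -g t) := fun a b hab => neg_le_neg (hanti hab)
  have hdiff : ∀ᵐ t ∂(volume : Measure ℝ), DifferentiableAt ℝ g t := by
    filter_upwards [hmono.ae_differentiableAt] with t ht
    have : g = fun s => -(-(g s)) := by funext s; ring
    rw [this]
    exact ht.neg
  have hdiff' : ∀ᵐ t ∂(volume.restrict (Set.Ioi (0:ℝ))), DifferentiableAt ℝ g t :=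
    ae_restrict_of_ae hdiff
  filter_upwards [hdiff', ae_restrict_mem measurableSet_Ioi] with t ht htpos
  have heq : g =ᶠ[𝓝 t] (fun s => iQ Y π f s y) := by
    filter_upwards [isOpen_Ioi.mem_nhds htpos] with s hs
    simp [hg, not_le.mpr (mem_Ioi.mp hs)]
  exact heq.differentiableAt_iff.mp ht
end
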